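/- Misspecified limit of minimum JSD: let P₀ be a probability distribution on a finite set, not contained in the nested models, and let δ* = min over all models and parameters of sqrt(D_JS(P₀, P_θ)), attained at θ^(l*) in model l*. If D_JS(P₀, P̂_D) → 0 almost surely (by the strong law of large numbers applied to empirical frequencies), then for every l ≥ l*, D_JS(P̂_D, P_{θ̂^(l)_JSD}) → (δ*)² almost surely, where θ̂^(l)_JSD minimizes D_JS(P̂_D, ·) over model l. -/

import Mathlib

open Real Finset Filter

/-- Kullback–Leibler divergence for categorical distributions (convention 0 ln 0 = 0). -/
noncomputable def klDiv {α : Type*} [Fintype α] (P Q : α → ℝ) : ℝ :=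
  ∑ x, P x * Real.log (P x / Q x)

/-- Jensen–Shannon divergence. -/
noncomputable def jsDiv {α : Type*} [Fintype α] (P Q : α → ℝ) : ℝ :=
  (1/2) * klDiv P (fun x => (P x + Q x) / 2) + (1/2) * klDiv Q (fun x => (P x + Q x) / 2)

/-!
Instead of the metric property of `√jsDiv`, the proof uses compactness of the probability
simplex. The function `jsDiv P₀ ·` is continuous there and vanishes only at `P₀`, so
`jsDiv P₀ P̂ₙ → 0` forces `P̂ₙ → P₀`. Since `jsDiv` is jointly continuous, `jsDiv P̂ₙ ·` then
converges to `jsDiv P₀ ·` uniformly on the simplex, and minima over `M l` of uniformly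
convergent functions converge to the minimum of the limit, which is `δ*²` because the global
minimiser `P*` lies in `M l` for `l ≥ l*`.
-/

open Topology

/-- On nonnegative vectors `jsDiv P Q = ∑ x, jsTerm (P x) (Q x)`; unlike the `klDiv` summands,
`jsTerm` is continuous on all of `ℝ × ℝ`. -/
noncomputable def jsTerm (p q : ℝ) : ℝ :=
  (p * log p + q * log q) / 2 - (p + q) / 2 * log ((p + q) / 2)

theorem continuous_jsTerm : Continuous fun pq : ℝ × ℝ => jsTerm pq.1 pq.2 := by
  have := Real.continuous_mul_log
  unfold jsTerm
  fun_prop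

theorem jsTerm_nonneg {p q : ℝ} (hp : 0 ≤ p) (hq : 0 ≤ q) : 0 ≤ jsTerm p q := by
  have h := Real.strictConvexOn_mul_log.convexOn.2 (Set.mem_Ici.2 hp) (Set.mem_Ici.2 hq)
    (by norm_num : (0 : ℝ) ≤ 1 / 2) (by norm_num : (0 : ℝ) ≤ 1 / 2) (by norm_num)
  simp only [smul_eq_mul] at h
  rw [show (1 / 2 : ℝ) * p + 1 / 2 * q = (p + q) / 2 by ring] at h
  unfold jsTerm
  linarith

theorem eq_of_jsTerm_eq_zero {p q : ℝ} (hp : 0 ≤ p) (hq : 0 ≤ q) (h : jsTerm p q = 0) :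
    p = q := by
  by_contra hne
  have h := Real.strictConvexOn_mul_log.2 (Set.mem_Ici.2 hp) (Set.mem_Ici.2 hq) hne
    (by norm_num : (0 : ℝ) < 1 / 2) (by norm_num : (0 : ℝ) < 1 / 2) (by norm_num)
  simp only [smul_eq_mul] at h
  rw [show (1 / 2 : ℝ) * p + 1 / 2 * q = (p + q) / 2 by ring] at h
  unfold jsTerm at *
  linarith

theorem mul_log_div_midpoint {p q : ℝ} (hp : 0 ≤ p) (hq : 0 ≤ q) :
    p * log (p / ((p + q) / 2)) = p * log p - p * log ((p + q) / 2) := by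
  rcases hp.eq_or_lt with rfl | hp
  · simp
  · rw [log_div hp.ne' (by positivity)]
    ring

theorem Continuous.tendstoUniformlyOn_of_isCompact {X Y Z : Type*} [UniformSpace X]
    [WeaklyLocallyCompactSpace X] [UniformSpace Y] [UniformSpace Z] {F : X → Y → Z}
    (hF : Continuous ↿F) {K : Set Y} (hK : IsCompact K) (x : X) :
    TendstoUniformlyOn F (F x) (𝓝 x) K := by
  obtain ⟨U, hU, hxU⟩ := exists_compact_mem_nhds x
  have := (hU.prod hK).uniformContinuousOn_of_continuous hF.continuousOn
  simpa only [nhdsWithin_eq_nhds.2 hxU] using this.tendstoUniformlyOn (mem_of_mem_nhds hxU)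

theorem TendstoUniformlyOn.tendsto_of_isMinOn {ι β : Type*} {l : Filter ι} {F : ι → β → ℝ}
    {f : β → ℝ} {s : Set β} (hF : TendstoUniformlyOn F f l s) {b : β} (hb : b ∈ s)
    (hmin : IsMinOn f s b) {y : ι → β} (hy : ∀ i, y i ∈ s) (hymin : ∀ i, IsMinOn (F i) s (y i)) :
    Tendsto (fun i => F i (y i)) l (𝓝 (f b)) := by
  refine Metric.tendsto_nhds.2 fun ε hε => ?_
  filter_upwards [Metric.tendstoUniformlyOn_iff.1 hF ε hε] with i hi
  have hFb := hi b hb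
  have hFy := hi (y i) (hy i)
  have hFmin := isMinOn_iff.1 (hymin i) b hb
  have hfmin := isMinOn_iff.1 hmin (y i) (hy i)
  rw [Real.dist_eq, abs_lt] at *
  constructor <;> linarith

section jsDiv

variable {α : Type*} [Fintype α]

theorem jsDiv_eq_sum_jsTerm {P Q : α → ℝ} (hP : 0 ≤ P) (hQ : 0 ≤ Q) :
    jsDiv P Q = ∑ x, jsTerm (P x) (Q x) := by
  simp only [jsDiv, klDiv, Finset.mul_sum, ← Finset.sum_add_distrib]
  refine Finset.sum_congr rfl fun x _ => ?_
  rw [mul_log_div_midpoint (hP x) (hQ x), add_comm (P x) (Q x),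
    mul_log_div_midpoint (hQ x) (hP x), add_comm (Q x) (P x), jsTerm]
  ring

theorem jsDiv_nonneg {P Q : α → ℝ} (hP : 0 ≤ P) (hQ : 0 ≤ Q) : 0 ≤ jsDiv P Q := by
  rw [jsDiv_eq_sum_jsTerm hP hQ]
  exact Finset.sum_nonneg fun x _ => jsTerm_nonneg (hP x) (hQ x)

theorem eq_of_jsDiv_eq_zero {P Q : α → ℝ} (hP : 0 ≤ P) (hQ : 0 ≤ Q) (h : jsDiv P Q = 0) :
    P = Q := by
  rw [jsDiv_eq_sum_jsTerm hP hQ,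
    Finset.sum_eq_zero_iff_of_nonneg fun x _ => jsTerm_nonneg (hP x) (hQ x)] at h
  exact funext fun x => eq_of_jsTerm_eq_zero (hP x) (hQ x) (h x (Finset.mem_univ x))

theorem continuous_sum_jsTerm :
    Continuous fun PQ : (α → ℝ) × (α → ℝ) => ∑ x, jsTerm (PQ.1 x) (PQ.2 x) :=
  continuous_finsetSum _ fun x _ =>
    continuous_jsTerm.comp' (f := fun PQ : (α → ℝ) × (α → ℝ) => (PQ.1 x, PQ.2 x)) (by fun_prop)

variable {ι : Type*} {l : Filter ι}

theorem tendsto_of_tendsto_jsDiv_zero {P₀ : α → ℝ} (hP₀ : 0 ≤ P₀) {P : ι → α → ℝ}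
    (hP : ∀ i, P i ∈ stdSimplex ℝ α) (h : Tendsto (fun i => jsDiv P₀ (P i)) l (𝓝 0)) :
    Tendsto P l (𝓝 P₀) := by
  refine (isCompact_stdSimplex ℝ α).tendsto_nhds_of_unique_mapClusterPt
    (Eventually.of_forall hP) fun Q hQ hclust => ?_
  have hQ₀ : 0 ≤ Q := hQ.1
  -- `jsDiv P₀ Q` is a cluster value of `jsDiv P₀ (P i) → 0`, hence `0`.
  have hcont : Continuous fun R : α → ℝ => ∑ x, jsTerm (P₀ x) (R x) :=
    continuous_sum_jsTerm.comp' (continuous_const.prodMk continuous_id)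
  have hclust' := hclust.tendsto_comp (hcont.tendsto Q)
  have hP_eq : (fun R : α → ℝ => ∑ x, jsTerm (P₀ x) (R x)) ∘ P = fun i => jsDiv P₀ (P i) :=
    funext fun i => (jsDiv_eq_sum_jsTerm hP₀ (hP i).1).symm
  rw [hP_eq, ← jsDiv_eq_sum_jsTerm hP₀ hQ₀] at hclust'
  have hzero : jsDiv P₀ Q = 0 := eq_of_nhds_neBot (hclust'.clusterPt.mono h)
  exact (eq_of_jsDiv_eq_zero hP₀ hQ₀ hzero).symm

theorem tendstoUniformlyOn_jsDiv {P₀ : α → ℝ} (hP₀ : 0 ≤ P₀) {P : ι → α → ℝ}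
    (hP : ∀ i, 0 ≤ P i) (hlim : Tendsto P l (𝓝 P₀)) {K : Set (α → ℝ)} (hK : IsCompact K)
    (hK₀ : ∀ Q ∈ K, 0 ≤ Q) :
    TendstoUniformlyOn (fun i => jsDiv (P i)) (jsDiv P₀) l K := by
  have hunif := (continuous_sum_jsTerm (α := α)).tendstoUniformlyOn_of_isCompact
    (F := fun P Q => ∑ x, jsTerm (P x) (Q x)) hK P₀
  have hcomp : TendstoUniformlyOn (fun i Q => ∑ x, jsTerm (P i x) (Q x))
      (fun Q => ∑ x, jsTerm (P₀ x) (Q x)) l K := fun u hu => hlim.eventually (hunif u hu)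
  refine (hcomp.congr (Eventually.of_forall fun i Q hQ => ?_)).congr_right fun Q hQ => ?_
  · exact (jsDiv_eq_sum_jsTerm (hP i) (hK₀ Q hQ)).symm
  · exact (jsDiv_eq_sum_jsTerm hP₀ (hK₀ Q hQ)).symm

end jsDiv

theorem misspecified_min_jsDiv_limit_general {α : Type*} [Fintype α] {L : ℕ}
    (P0 : α → ℝ) (hP0 : ∀ x, 0 < P0 x)
    (M : Fin L → Set (α → ℝ)) (hnested : Monotone M)
    (hMpmf : ∀ l, ∀ R ∈ M l, (∀ x, 0 < R x) ∧ ∑ x, R x = 1)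
    (Phat : ℕ → α → ℝ)
    (hPhat : ∀ n, (∀ x, 0 ≤ Phat n x) ∧ ∑ x, Phat n x = 1)
    (hPhatconv : Tendsto (fun n => jsDiv P0 (Phat n)) atTop (nhds 0))
    (δstar : ℝ)
    (lstar : Fin L) (Pstar : α → ℝ) (hPstarMem : Pstar ∈ M lstar)
    (hδeq : δstar = Real.sqrt (jsDiv P0 Pstar))
    (hδmin : ∀ l, ∀ R ∈ M l, δstar ≤ Real.sqrt (jsDiv P0 R))
    (Rhat : Fin L → ℕ → α → ℝ)
    (hRhatMem : ∀ l n, Rhat l n ∈ M l)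
    (hRhatMin : ∀ l n, ∀ R ∈ M l, jsDiv (Phat n) (Rhat l n) ≤ jsDiv (Phat n) R) :
    ∀ l, lstar ≤ l →
      Tendsto (fun n => jsDiv (Phat n) (Rhat l n)) atTop (nhds (δstar ^ 2)) := by
  intro l hl
  have hP0nonneg : 0 ≤ P0 := fun x => (hP0 x).le
  have hM : ∀ l, M l ⊆ stdSimplex ℝ α := fun l R hR =>
    ⟨fun x => ((hMpmf l R hR).1 x).le, (hMpmf l R hR).2⟩
  have hPhat_lim : Tendsto Phat atTop (𝓝 P0) :=
    tendsto_of_tendsto_jsDiv_zero hP0nonneg hPhat hPhatconv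
  have hunif : TendstoUniformlyOn (fun n => jsDiv (Phat n)) (jsDiv P0) atTop (M l) :=
    (tendstoUniformlyOn_jsDiv hP0nonneg (fun n => (hPhat n).1) hPhat_lim
      (isCompact_stdSimplex ℝ α) fun Q hQ => hQ.1).mono (hM l)
  have hPstar_min : IsMinOn (jsDiv P0) (M l) Pstar := fun R hR =>
    (sqrt_le_sqrt_iff (jsDiv_nonneg hP0nonneg (hM l hR).1)).1 (hδeq ▸ hδmin l R hR)
  rw [hδeq, sq_sqrt (jsDiv_nonneg hP0nonneg (hM lstar hPstarMem).1)]
  exact hunif.tendsto_of_isMinOn (hnested hl hPstarMem) hPstar_min (hRhatMem l)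
    fun n => isMinOn_iff.2 (hRhatMin l n)

/-- Misspecified limit of minimum JSD: if P₀ lies outside the nested models, δ* is the
minimal value of √D_JS(P₀,·) over all models, attained at Pstar ∈ M lstar, and the empirical
distributions P̂ satisfy D_JS(P₀, P̂ₙ) → 0, then for every l ≥ l*,
D_JS(P̂ₙ, P_{θ̂^(l)}) → (δ*)². -/
theorem misspecified_min_jsDiv_limit {α : Type*} [Fintype α] {L : ℕ}
    (P0 : α → ℝ) (hP0 : ∀ x, 0 < P0 x) (hP0sum : ∑ x, P0 x = 1)
    (M : Fin L → Set (α → ℝ)) (hnested : Monotone M)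
    (hMpmf : ∀ l, ∀ R ∈ M l, (∀ x, 0 < R x) ∧ ∑ x, R x = 1)
    (hP0out : ∀ l, P0 ∉ M l)
    (Phat : ℕ → α → ℝ)
    (hPhat : ∀ n, (∀ x, 0 ≤ Phat n x) ∧ ∑ x, Phat n x = 1)
    (hPhatconv : Tendsto (fun n => jsDiv P0 (Phat n)) atTop (nhds 0))
    (δstar : ℝ) (hδpos : 0 < δstar)
    (lstar : Fin L) (Pstar : α → ℝ) (hPstarMem : Pstar ∈ M lstar)
    (hδeq : δstar = Real.sqrt (jsDiv P0 Pstar))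
    (hδmin : ∀ l, ∀ R ∈ M l, δstar ≤ Real.sqrt (jsDiv P0 R))
    (Rhat : Fin L → ℕ → α → ℝ)
    (hRhatMem : ∀ l n, Rhat l n ∈ M l)
    (hRhatMin : ∀ l n, ∀ R ∈ M l, jsDiv (Phat n) (Rhat l n) ≤ jsDiv (Phat n) R) :
    ∀ l, lstar ≤ l →
      Tendsto (fun n => jsDiv (Phat n) (Rhat l n)) atTop (nhds (δstar ^ 2)) :=
  misspecified_min_jsDiv_limit_general P0 hP0 M hnested hMpmf Phat hPhat hPhatconv δstar lstar Pstar
    hPstarMem hδeq hδmin Rhat hRhatMem hRhatMin
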